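/- arXiv:2011.13133 — 6 statements merged into one kernel-verified Lean document; each statement's English description precedes it below -/
import Mathlib

section
/- In one-dimensional space (ℝ with absolute value metric), if f : ℝ^n → ℝ is a deterministic, unanimous, translation-invariant, strategyproof mechanism, then for every profile A = (A_1,…,A_n) there exists an agent i such that f(A) = A_i. -/
section aux
variable {n : ℕ} {f : (Fin n → ℝ) → ℝ}

/-- Moving a single below-output agent rightward (staying below the output)
preserves the output. -/
lemma snapBelow
    (hsp : ∀ (A : Fin n → ℝ) (i : Fin n) (A' : ℝ),
      |f A - A i| ≤ |f (Function.update A i A') - A i|)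
    {B : Fin n → ℝ} {x L : ℝ} (j : Fin n)
    (hfB : f B = x) (_hj : B j < x) (hjL : B j ≤ L) (hL : L < x) :
    f (Function.update B j L) = x := by
  rcases eq_or_lt_of_le hjL with h | h
  · rw [← h, Function.update_eq_self, hfB]
  · have h1 := hsp B j L
    have h2 := hsp (Function.update B j L) j (B j)
    rw [hfB] at h1
    rw [Function.update_idem, Function.update_eq_self, hfB, Function.update_self] at h2
    set z := f (Function.update B j L) with hz
    have hx1 : x - B j ≤ |z - B j| := by
      calc x - B j = |x - B j| := (abs_of_pos (by linarith)).symm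
      _ ≤ |z - B j| := h1
    rw [abs_of_pos (by linarith : (0:ℝ) < x - L), abs_le] at h2
    rcases abs_cases (z - B j) with ⟨e, _⟩ | ⟨e, _⟩ <;> rw [e] at hx1 <;> linarith [h2.1, h2.2]

/-- Mirror: moving a single above-output agent leftward (staying above the output)
preserves the output. -/
lemma snapAbove
    (hsp : ∀ (A : Fin n → ℝ) (i : Fin n) (A' : ℝ),
      |f A - A i| ≤ |f (Function.update A i A') - A i|)
    {B : Fin n → ℝ} {x R : ℝ} (j : Fin n)
    (hfB : f B = x) (_hj : x < B j) (hjR : R ≤ B j) (hR : x < R) :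
    f (Function.update B j R) = x := by
  rcases eq_or_lt_of_le hjR with h | h
  · rw [h, Function.update_eq_self, hfB]
  · have h1 := hsp B j R
    have h2 := hsp (Function.update B j R) j (B j)
    rw [hfB] at h1
    rw [Function.update_idem, Function.update_eq_self, hfB, Function.update_self] at h2
    set z := f (Function.update B j R) with hz
    have hx1 : B j - x ≤ |z - B j| := by
      calc B j - x = |x - B j| := by rw [abs_sub_comm]; exact (abs_of_pos (by linarith)).symm
      _ ≤ |z - B j| := h1
    rw [show |x - R| = R - x by rw [abs_sub_comm]; exact abs_of_pos (by linarith), abs_le] at h2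
    rcases abs_cases (z - B j) with ⟨e, _⟩ | ⟨e, _⟩ <;> rw [e] at hx1 <;> linarith [h2.1, h2.2]

/-- Move all below-output agents in `s` to `L`, preserving the output. -/
lemma moveBelow
    (hsp : ∀ (A : Fin n → ℝ) (i : Fin n) (A' : ℝ),
      |f A - A i| ≤ |f (Function.update A i A') - A i|)
    {x L : ℝ} (hL : L < x)
    (s : Finset (Fin n)) (B : Fin n → ℝ) (hfB : f B = x)
    (hall : ∀ i, B i < x → B i ≤ L) :
    f (fun i => if i ∈ s ∧ B i < x then L else B i) = x := by
  classical
  induction s using Finset.induction_on with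
  | empty => simpa using hfB
  | @insert j s hjs ih =>
    by_cases hj : B j < x
    · have hCj : (fun i => if i ∈ s ∧ B i < x then L else B i) j = B j := by
        simp [hjs]
      have key := snapBelow hsp j ih (by simp only [hjs, false_and, if_neg, and_false]; simpa [hjs] using hj) (by simpa [hjs] using hall j hj) hL
      have heq : Function.update (fun i => if i ∈ s ∧ B i < x then L else B i) j L
          = fun i => if i ∈ insert j s ∧ B i < x then L else B i := by
        funext i
        by_cases hij : i = j
        · subst hij; simp [hj]
        · simp [Function.update_apply, hij, Finset.mem_insert]
      rw [← heq]; exact key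
    · have heq : (fun i => if i ∈ insert j s ∧ B i < x then L else B i)
          = fun i => if i ∈ s ∧ B i < x then L else B i := by
        funext i
        by_cases hij : i = j
        · subst hij; simp [hj]
        · simp [Finset.mem_insert, hij]
      rw [heq]; exact ih

/-- Move all above-output agents in `s` to `R`, preserving the output. -/
lemma moveAbove
    (hsp : ∀ (A : Fin n → ℝ) (i : Fin n) (A' : ℝ),
      |f A - A i| ≤ |f (Function.update A i A') - A i|)
    {x R : ℝ} (hR : x < R)
    (s : Finset (Fin n)) (B : Fin n → ℝ) (hfB : f B = x)
    (hall : ∀ i, x < B i → R ≤ B i) :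
    f (fun i => if i ∈ s ∧ x < B i then R else B i) = x := by
  classical
  induction s using Finset.induction_on with
  | empty => simpa using hfB
  | @insert j s hjs ih =>
    by_cases hj : x < B j
    · have hCj : (fun i => if i ∈ s ∧ x < B i then R else B i) j = B j := by
        simp [hjs]
      have key := snapAbove hsp j ih (by simpa [hjs] using hj) (by simpa [hjs] using hall j hj) hR
      have heq : Function.update (fun i => if i ∈ s ∧ x < B i then R else B i) j R
          = fun i => if i ∈ insert j s ∧ x < B i then R else B i := by
        funext i
        by_cases hij : i = j
        · subst hij; simp [hj]
        · simp [Function.update_apply, hij, Finset.mem_insert]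
      rw [← heq]; exact key
    · have heq : (fun i => if i ∈ insert j s ∧ x < B i then R else B i)
          = fun i => if i ∈ s ∧ x < B i then R else B i := by
        funext i
        by_cases hij : i = j
        · subst hij; simp [hj]
        · simp [Finset.mem_insert, hij]
      rw [heq]; exact ih

/-- Coalition strategyproofness: if all members of `s` are at `p`, moving them
all to `p'` cannot bring the output closer to `p`. -/
lemma coalitionSP
    (hsp : ∀ (A : Fin n → ℝ) (i : Fin n) (A' : ℝ),
      |f A - A i| ≤ |f (Function.update A i A') - A i|)
    (s : Finset (Fin n)) (p' : ℝ) :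
    ∀ (B : Fin n → ℝ) (p : ℝ), (∀ i ∈ s, B i = p) →
      |f B - p| ≤ |f (fun i => if i ∈ s then p' else B i) - p| := by
  classical
  induction s using Finset.induction_on with
  | empty => intro B p _; simp
  | @insert j s hjs ih =>
    intro B p hBp
    have h1 : |f B - p| ≤ |f (fun i => if i ∈ s then p' else B i) - p| :=
      ih B p (fun i hi => hBp i (Finset.mem_insert_of_mem hi))
    have hCj : (if j ∈ s then p' else B j) = p := by
      simp [hjs, hBp j (Finset.mem_insert_self j s)]
    have h2 := hsp (fun i => if i ∈ s then p' else B i) j p'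
    rw [hCj] at h2
    have heq : Function.update (fun i => if i ∈ s then p' else B i) j p'
        = fun i => if i ∈ insert j s then p' else B i := by
      funext i
      by_cases hij : i = j
      · subst hij; simp
      · simp [Function.update_apply, hij, Finset.mem_insert]
    rw [heq] at h2
    exact le_trans h1 h2

end aux

/-- In one dimension, every deterministic, unanimous,
translation-invariant, strategyproof mechanism outputs some agent's location. -/
theorem stmt1 {n : ℕ} (f : (Fin n → ℝ) → ℝ)
    (hsp : ∀ (A : Fin n → ℝ) (i : Fin n) (A' : ℝ),
      |f A - A i| ≤ |f (Function.update A i A') - A i|)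
    (huna : ∀ c : ℝ, f (fun _ => c) = c)
    (htrans : ∀ (A : Fin n → ℝ) (t : ℝ), f (fun j => A j + t) = f A + t) :
    ∀ A : Fin n → ℝ, ∃ i : Fin n, f A = A i := by
  classical
  intro A
  by_contra hcon
  push_neg at hcon
  set x := f A with hx
  -- n ≠ 0
  have hn : 0 < n := by
    rcases Nat.eq_zero_or_pos n with h | h
    · subst h
      have he : (fun _ : Fin 0 => (0:ℝ)) = fun _ => 1 := funext fun i => i.elim0
      have h0 := huna 0
      have h1 := huna 1
      rw [he] at h0
      exact absurd (h0.symm.trans h1) (by norm_num)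
    · exact h
  have hside : ∀ i, A i < x ∨ x < A i := by
    intro i
    rcases lt_trichotomy (A i) x with h | h | h
    · exact Or.inl h
    · exact absurd h.symm (hcon i)
    · exact Or.inr h
  -- case: nobody above x
  by_cases hab : ∃ i, x < A i
  case neg =>
    have hallb : ∀ i, A i < x := by
      intro i
      rcases hside i with h | h
      · exact h
      · exact absurd ⟨i, h⟩ hab
    have hne : (Finset.univ : Finset (Fin n)).Nonempty := ⟨⟨0, hn⟩, Finset.mem_univ _⟩
    obtain ⟨iM, _, hM⟩ := Finset.exists_mem_eq_sup' hne A
    set M := Finset.univ.sup' hne A with hMdef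
    have hMx : M < x := hM ▸ hallb iM
    have key := moveBelow hsp hMx Finset.univ A hx.symm
      (fun i _ => Finset.le_sup' A (Finset.mem_univ i))
    have heq : (fun i => if i ∈ Finset.univ ∧ A i < x then M else A i) = fun _ => M := by
      funext i; simp [hallb i]
    rw [heq, huna M] at key
    exact absurd key (ne_of_lt hMx)
  case pos =>
  by_cases hbe : ∃ i, A i < x
  case neg =>
    have halla : ∀ i, x < A i := by
      intro i
      rcases hside i with h | h
      · exact absurd ⟨i, h⟩ hbe
      · exact h
    have hne : (Finset.univ : Finset (Fin n)).Nonempty := ⟨⟨0, hn⟩, Finset.mem_univ _⟩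
    obtain ⟨im, _, hm⟩ := Finset.exists_mem_eq_inf' hne A
    set M := Finset.univ.inf' hne A with hMdef
    have hMx : x < M := hm ▸ halla im
    have key := moveAbove hsp hMx Finset.univ A hx.symm
      (fun i _ => Finset.inf'_le A (Finset.mem_univ i))
    have heq : (fun i => if i ∈ Finset.univ ∧ x < A i then M else A i) = fun _ => M := by
      funext i; simp [halla i]
    rw [heq, huna M] at key
    exact absurd key (ne_of_gt hMx)
  case pos =>
  -- both sides nonempty
  obtain ⟨ib, hib⟩ := hbe
  obtain ⟨ia, hia⟩ := hab
  set sb : Finset (Fin n) := Finset.univ.filter (fun i => A i < x) with hsb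
  set sa : Finset (Fin n) := Finset.univ.filter (fun i => ¬ A i < x) with hsa
  have hnb : sb.Nonempty := ⟨ib, by simp [hsb, hib]⟩
  have hna : sa.Nonempty := ⟨ia, by simp [hsa]; exact le_of_lt hia⟩
  set L := sb.sup' hnb A with hLdef
  set R := sa.inf' hna A with hRdef
  obtain ⟨iL, hiL, hLeq⟩ := Finset.exists_mem_eq_sup' hnb A
  obtain ⟨iR, hiR, hReq⟩ := Finset.exists_mem_eq_inf' hna A
  have hLx : L < x := by
    have h1 : A iL < x := (Finset.mem_filter.mp hiL).2
    rw [hLdef, hLeq]; exact h1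
  have hxR : x < R := by
    have h1 : ¬ A iR < x := (Finset.mem_filter.mp hiR).2
    have h2 : x < A iR := (hside iR).resolve_left h1
    rw [hRdef, hReq]; exact h2
  have hallL : ∀ i, A i < x → A i ≤ L :=
    fun i hi => Finset.le_sup' A (Finset.mem_filter.mpr ⟨Finset.mem_univ i, hi⟩)
  have hallR : ∀ i, x < A i → R ≤ A i :=
    fun i hi => Finset.inf'_le A (Finset.mem_filter.mpr ⟨Finset.mem_univ i, not_lt_of_gt hi⟩)
  -- snap below agents to L
  set B1 : Fin n → ℝ := fun i => if A i < x then L else A i with hB1def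
  have hB1 : f B1 = x := by
    have key := moveBelow hsp hLx Finset.univ A hx.symm hallL
    have heq : (fun i => if i ∈ Finset.univ ∧ A i < x then L else A i) = B1 := by
      funext i; simp [hB1def]
    rw [heq] at key; exact key
  -- snap above agents to R
  set B2 : Fin n → ℝ := fun i => if A i < x then L else R with hB2def
  have hB2 : f B2 = x := by
    have hall1 : ∀ i, x < B1 i → R ≤ B1 i := by
      intro i hi
      by_cases h : A i < x
      · simp only [hB1def, if_pos h] at hi ⊢
        exact absurd hi (not_lt_of_gt hLx)
      · simp only [hB1def, if_neg h] at hi ⊢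
        exact hallR i hi
    have key := moveAbove hsp hxR Finset.univ B1 hB1 hall1
    have heq : (fun i => if i ∈ Finset.univ ∧ x < B1 i then R else B1 i) = B2 := by
      funext i
      by_cases h : A i < x
      · simp [hB1def, hB2def, h, not_lt_of_gt hLx]
      · have h2 : x < A i := (hside i).resolve_left h
        simp [hB1def, hB2def, h, h2]
    rw [heq] at key; exact key
  -- two-coalition mechanism
  set g : ℝ → ℝ → ℝ := fun p q => f (fun i => if A i < x then p else q) with hgdef
  have hgLR : g L R = x := hB2
  have gtrans : ∀ p q t, g (p + t) (q + t) = g p q + t := by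
    intro p q t
    have heq : (fun i => if A i < x then p + t else q + t)
        = fun i => (if A i < x then p else q) + t := by
      funext i; by_cases h : A i < x <;> simp [h]
    simp only [hgdef, heq]
    exact htrans _ t
  have gsp1 : ∀ p p' q, |g p q - p| ≤ |g p' q - p| := by
    intro p p' q
    have key := coalitionSP hsp sb p' (fun i => if A i < x then p else q) p
      (fun i hi => by simp [hsb] at hi; simp [hi])
    have heq : (fun i => if i ∈ sb then p' else if A i < x then p else q)
        = fun i => if A i < x then p' else q := by
      funext i; by_cases h : A i < x <;> simp [hsb, h]
    rw [heq] at key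
    exact key
  have gsp2 : ∀ p q q', |g p q - q| ≤ |g p q' - q| := by
    intro p q q'
    have key := coalitionSP hsp sa q' (fun i => if A i < x then p else q) q
      (fun i hi => by simp [hsa] at hi; simp [hi])
    have heq : (fun i => if i ∈ sa then q' else if A i < x then p else q)
        = fun i => if A i < x then p else q' := by
      funext i; by_cases h : A i < x <;> simp [hsa, h]
    rw [heq] at key
    exact key
  -- one-variable reduction
  set h : ℝ → ℝ := fun d => g d 0 with hhdef
  have hrel : ∀ p q, g p q = h (p - q) + q := by
    intro p q
    have h1 := gtrans (p - q) 0 q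
    have e1 : p - q + q = p := by ring
    have e2 : (0:ℝ) + q = q := by ring
    rw [e1, e2] at h1
    exact h1
  have hcond1 : ∀ d d', |h d - d| ≤ |h d' - d| := fun d d' => gsp1 d d' 0
  have hcond2 : ∀ d d', |h d| ≤ |h d' + d - d'| := by
    intro d d'
    have key := gsp2 d 0 (d - d')
    rw [hrel d (d - d')] at key
    have e1 : d - (d - d') = d' := by ring
    rw [e1] at key
    simp only [sub_zero] at key
    have e2 : h d' + (d - d') = h d' + d - d' := by ring
    rw [e2] at key
    exact key
  -- the contradiction
  set d0 := L - R with hd0def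
  have hm : h d0 = x - R := by
    have := hrel L R
    rw [hgLR] at this
    linarith [this]
  set m := x - R with hmdef
  have hd0neg : d0 < 0 := by rw [hd0def]; linarith
  have hmneg : m < 0 := by rw [hmdef]; linarith
  set γ := m - d0 with hγdef
  have hgam : 0 < γ := by rw [hγdef, hmdef, hd0def]; linarith
  -- Step A : h (-γ) = 0
  have hA : h (-γ) = 0 := by
    have := hcond2 (-γ) d0
    rw [hm] at this
    have e : m + -γ - d0 = 0 := by rw [hγdef]; ring
    rw [e, abs_zero] at this
    exact abs_eq_zero.mp (le_antisymm this (abs_nonneg _))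
  -- Step B : m + γ < 0
  have hB : m + γ < 0 := by
    have hb := hcond1 (-γ) d0
    rw [hA, hm] at hb
    have e1 : (0:ℝ) - -γ = γ := by ring
    have e2 : m - -γ = m + γ := by ring
    rw [e1, e2, abs_of_pos hgam] at hb
    rcases abs_cases (m + γ) with ⟨e, he⟩ | ⟨e, he⟩
    · rw [e] at hb; linarith
    · exact he
  -- Step C : h m = m, then contradiction
  have hCm : h m = m := by
    have hc := hcond1 m d0
    rw [hm, sub_self, abs_zero] at hc
    have h0 : |h m - m| = 0 := le_antisymm hc (abs_nonneg _)
    have h1 := abs_eq_zero.mp h0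
    linarith
  have hD := hcond2 m d0
  rw [hm, hCm] at hD
  have e3 : m + m - d0 = m + γ := by rw [hγdef]; ring
  rw [e3] at hD
  rw [abs_of_neg hmneg, abs_of_neg hB] at hD
  linarith [hgam]
end

section
/- Let f : (ℝ^m)^n → ℝ^m be a strategyproof mechanism under the Euclidean norm, let A be a profile with output W = f(A), and let i be an agent. Then for every point A_i' on the closed segment between A_i and W, f(A_i', A_{-i}) = W. (I.e., moving an agent along the straight segment toward the output does not change the output.) -/
/-!
Let `W = f A`, `B` the output after agent `i` moves to `A'`, and `A' = A i + t (W - A i)`.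
Truthfulness at `A` gives `‖W - A i‖ ≤ ‖B - A i‖`; truthfulness at the moved profile, where
`A i` is the misreport, gives `‖B - A'‖ ≤ ‖W - A'‖`. Together with the triangle inequality
through `A'` this forces `‖B - A i‖ = ‖B - A'‖ + ‖A' - A i‖` and `‖B - A'‖ = ‖W - A'‖`.
By strict convexity of the Euclidean norm, `B - A'` then points in the direction of
`A' - A i`, as does `W - A'`; two vectors on the same ray with the same norm coincide.
-/

theorem eq_of_mem_segment_of_norm_sub_le {E : Type*} [NormedAddCommGroup E] [NormedSpace ℝ E]
    [StrictConvexSpace ℝ E] {x y w b : E} (hy : y ∈ segment ℝ x w) (hyx : y ≠ x)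
    (hwb : ‖w - x‖ ≤ ‖b - x‖) (hbw : ‖b - y‖ ≤ ‖w - y‖) : b = w := by
  have hsplit : ‖w - y‖ + ‖y - x‖ = ‖w - x‖ := by
    rw [add_comm, norm_sub_rev w y, norm_sub_rev y x, norm_sub_rev w x]
    simpa only [dist_eq_norm] using dist_add_dist_of_mem_segment hy
  have htri : ‖b - x‖ ≤ ‖b - y‖ + ‖y - x‖ := norm_sub_le_norm_sub_add_norm_sub b y x
  have hby : ‖b - y‖ = ‖w - y‖ := by linarith
  have hray_by : SameRay ℝ (b - y) (y - x) := by
    rw [sameRay_iff_norm_add, sub_add_sub_cancel]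
    linarith
  have hray_yw : SameRay ℝ (y - x) (w - y) := (mem_segment_iff_wbtw.mp hy).sameRay_vsub
  have hray : SameRay ℝ (b - y) (w - y) :=
    hray_by.trans hray_yw fun h => absurd (sub_eq_zero.mp h) hyx
  exact sub_left_injective (hray.eq_of_norm_eq hby)

/-- Moving an agent along the segment toward the output of a
strategyproof mechanism (Euclidean norm) does not change the output. -/
theorem stmt2 {m n : ℕ} (f : (Fin n → EuclideanSpace ℝ (Fin m)) → EuclideanSpace ℝ (Fin m))
    (hsp : ∀ (A : Fin n → EuclideanSpace ℝ (Fin m)) (i : Fin n) (A' : EuclideanSpace ℝ (Fin m)),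
      ‖f A - A i‖ ≤ ‖f (Function.update A i A') - A i‖)
    (A : Fin n → EuclideanSpace ℝ (Fin m)) (i : Fin n)
    (A' : EuclideanSpace ℝ (Fin m)) (hA' : A' ∈ segment ℝ (A i) (f A)) :
    f (Function.update A i A') = f A := by
  by_cases hA'i : A' = A i
  · rw [hA'i, Function.update_eq_self]
  have hback := hsp (Function.update A i A') i (A i)
  rw [Function.update_idem, Function.update_eq_self, Function.update_self] at hback
  exact eq_of_mem_segment_of_norm_sub_le hA' hA'i (hsp A i A') hback
end

section
/- In Euclidean m-space with two agents, let f be a deterministic, unanimous, translation-invariant, strategyproof mechanism. If for some profile (A, B) with A ≠ B the output W = f(A, B) lies on the line through A and B, then W = A or W = B. -/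
/-- In Euclidean m-space with two agents, if the output of a
deterministic, unanimous, translation-invariant, strategyproof mechanism lies on
the line through the two (distinct) agents, then it is one of the agents. -/
theorem stmt4 {m : ℕ}
    (f : EuclideanSpace ℝ (Fin m) → EuclideanSpace ℝ (Fin m) → EuclideanSpace ℝ (Fin m))
    (hsp1 : ∀ A A' B, ‖f A B - A‖ ≤ ‖f A' B - A‖)
    (hsp2 : ∀ A B B', ‖f A B - B‖ ≤ ‖f A B' - B‖)
    (huna : ∀ C, f C C = C)
    (htrans : ∀ A B t, f (A + t) (B + t) = f A B + t)
    (A B : EuclideanSpace ℝ (Fin m)) (hAB : A ≠ B)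
    (hline : ∃ s : ℝ, f A B = A + s • (B - A)) :
    f A B = A ∨ f A B = B := by
  obtain ⟨s, hs⟩ := hline
  set d : EuclideanSpace ℝ (Fin m) := B - A with hd
  have hdne : d ≠ 0 := sub_ne_zero.mpr (Ne.symm hAB)
  have hdpos : 0 < ‖d‖ := norm_pos_iff.mpr hdne
  -- |s| ≤ 1
  have h1 : |s| * ‖d‖ ≤ 1 * ‖d‖ := by
    have := hsp1 A B B
    rw [huna B, hs] at this
    have e1 : A + s • d - A = s • d := by abel
    rw [e1, norm_smul, Real.norm_eq_abs] at this
    simpa [hd] using this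
  have habs1 : |s| ≤ 1 := le_of_mul_le_mul_right h1 hdpos
  -- |s - 1| ≤ 1
  have h2 : |s - 1| * ‖d‖ ≤ 1 * ‖d‖ := by
    have := hsp2 A B A
    rw [huna A, hs] at this
    have e1 : A + s • d - B = (s - 1) • d := by
      rw [hd]; module
    have e2 : A - B = (-1 : ℝ) • d := by rw [hd]; module
    rw [e1, e2, norm_smul, norm_smul, Real.norm_eq_abs, Real.norm_eq_abs] at this
    simpa using this
  have habs2 : |s - 1| ≤ 1 := le_of_mul_le_mul_right h2 hdpos
  have hs0 : 0 ≤ s := by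
    rcases abs_cases (s - 1) with ⟨h, _⟩ | ⟨h, _⟩ <;> linarith [habs1, habs2, abs_nonneg s, le_abs_self s, neg_abs_le s, h ▸ habs2]
  have hs1 : s ≤ 1 := le_trans (le_abs_self s) habs1
  -- f (A + s•d) B = A + s•d
  have hW1 : f (A + s • d) B = A + s • d := by
    have := hsp1 (A + s • d) A B
    rw [hs] at this
    have e1 : A + s • d - (A + s • d) = 0 := by abel
    rw [e1, norm_zero] at this
    have := norm_le_zero_iff.mp this
    exact sub_eq_zero.mp this
  -- f A (B - s•d) = A
  have hC1 : f A (B - s • d) = A := by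
    have := htrans (A + s • d) B (-(s • d))
    rw [hW1] at this
    have e1 : A + s • d + -(s • d) = A := by abel
    have e2 : B + -(s • d) = B - s • d := by abel
    rw [e1, e2] at this
    simpa using this
  -- inequality I1 : |s-1| ≤ |2s-1|
  have hI1 : |s - 1| * ‖d‖ ≤ |2 * s - 1| * ‖d‖ := by
    have := hsp2 A (B - s • d) B
    rw [hC1, hs] at this
    have e1 : A - (B - s • d) = (s - 1) • d := by rw [hd]; module
    have e2 : A + s • d - (B - s • d) = (2 * s - 1) • d := by rw [hd]; module
    rw [e1, e2, norm_smul, norm_smul, Real.norm_eq_abs, Real.norm_eq_abs] at this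
    exact this
  have hI1' : |s - 1| ≤ |2 * s - 1| := le_of_mul_le_mul_right hI1 hdpos
  -- f A (A + s•d) = A + s•d
  have hW2 : f A (A + s • d) = A + s • d := by
    have := hsp2 A (A + s • d) B
    rw [hs] at this
    have e1 : A + s • d - (A + s • d) = 0 := by abel
    rw [e1, norm_zero] at this
    have := norm_le_zero_iff.mp this
    exact sub_eq_zero.mp this
  -- f (B - s•d) B = B
  have hC2 : f (B - s • d) B = B := by
    have := htrans A (A + s • d) (B - A - s • d)
    rw [hW2] at this
    have e1 : A + (B - A - s • d) = B - s • d := by abel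
    have e2 : A + s • d + (B - A - s • d) = B := by abel
    rw [e1, e2] at this
    exact this
  -- inequality I2 : |s| ≤ |2s-1|
  have hI2 : |s| * ‖d‖ ≤ |2 * s - 1| * ‖d‖ := by
    have := hsp1 (B - s • d) A B
    rw [hC2, hs] at this
    have e1 : B - (B - s • d) = s • d := by abel
    have e2 : A + s • d - (B - s • d) = (2 * s - 1) • d := by rw [hd]; module
    rw [e1, e2, norm_smul, norm_smul, Real.norm_eq_abs, Real.norm_eq_abs] at this
    exact this
  have hI2' : |s| ≤ |2 * s - 1| := le_of_mul_le_mul_right hI2 hdpos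
  -- conclude s = 0 or s = 1
  have : s = 0 ∨ s = 1 := by
    rcases abs_cases (2 * s - 1) with ⟨h, _⟩ | ⟨h, _⟩
    · right
      have : s ≤ 2 * s - 1 := h ▸ le_trans (le_abs_self s) hI2'
      linarith
    · left
      have h1 : 1 - s ≤ 1 - 2 * s := by
        have := hI1'
        rw [h] at this
        have : |s - 1| ≤ -(2 * s - 1) := this
        have habs : 1 - s ≤ |s - 1| := by
          rw [abs_sub_comm]; exact le_abs_self (1 - s)
        linarith
      linarith
  rcases this with h | h
  · left; rw [hs, h]; simp
  · right; rw [hs, h, hd]; module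
end

section
/- In Euclidean m-space (m ≥ 2) with two agents, let f be a deterministic, unanimous, translation-invariant, strategyproof mechanism. Then for every profile (A, B), the output W = f(A, B) satisfies (A − W) · (B − W) = 0, i.e., W lies on the sphere with segment AB as diameter. -/
/-!
Write `W = f A B` and let `Z` be a point of the segment `[W, A)`. Strategyproofness for agent 1,
in both directions between `A` and `Z`, forces `f Z B` into the closed ball of radius `‖Z - W‖`
about `Z` and outside the open ball of radius `‖A - W‖` about `A`; by strict convexity these
meet only at `W`, so `f Z B = W`. Agent 2 at `(Z, B)` may then misreport `Z` (obtaining `Z` by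
unanimity) or `B - (A - Z)` (obtaining `W - (A - Z)` by translation invariance). Neither helps,
so `‖W - B‖ ≤ ‖W - B + t • (A - W)‖` for all small `t` of either sign, and the first-order term
`⟪W - B, A - W⟫` vanishes.
-/

open AffineMap Filter Topology

theorem inner_nonneg_of_forall_norm_le_norm_add_smul {F : Type*} [NormedAddCommGroup F]
    [InnerProductSpace ℝ F] {w v : F} (h : ∀ t : ℝ, 0 < t → t < 1 → ‖w‖ ≤ ‖w + t • v‖) :
    0 ≤ inner ℝ w v := by
  have hexpand : ∀ t : ℝ, 0 < t → t < 1 → 0 ≤ 2 * inner ℝ w v + t * ‖v‖ ^ 2 := by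
    intro t ht0 ht1
    have hsq := pow_le_pow_left₀ (norm_nonneg w) (h t ht0 ht1) 2
    rw [norm_add_sq_real, real_inner_smul_right, norm_smul, Real.norm_of_nonneg ht0.le] at hsq
    nlinarith
  have hlim : Tendsto (fun t : ℝ => 2 * inner ℝ w v + t * ‖v‖ ^ 2) (𝓝[>] 0)
      (𝓝 (2 * inner ℝ w v)) := by
    have : Continuous (fun t : ℝ => 2 * inner ℝ w v + t * ‖v‖ ^ 2) := by fun_prop
    simpa using (this.tendsto 0).mono_left nhdsWithin_le_nhds
  have := ge_of_tendsto hlim <|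
    eventually_of_mem (Ioo_mem_nhdsGT one_pos) fun t ht => hexpand t ht.1 ht.2
  linarith

section StrictConvexSpace

variable {E : Type*} [NormedAddCommGroup E] [NormedSpace ℝ E] [StrictConvexSpace ℝ E]

theorem eq_of_dist_lineMap_le_of_dist_le {x y p : E} {s : ℝ} (hs0 : 0 ≤ s) (hs1 : s < 1)
    (hp : dist p (lineMap x y s) ≤ dist x (lineMap x y s)) (hy : dist x y ≤ dist p y) :
    p = x := by
  set z := lineMap x y s with hz
  have hxz : dist x z = s * dist x y := by
    rw [dist_left_lineMap, Real.norm_of_nonneg hs0]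
  have hzy : dist z y = (1 - s) * dist x y := by
    rw [dist_lineMap_right, Real.norm_of_nonneg (by linarith)]
  have hpy : dist p y ≤ dist p z + dist z y := dist_triangle _ _ _
  -- equality in the triangle inequality through `z`: it divides `[y, p]` as it divides `[y, x]`
  have hzp : dist z p = s * dist y p := by
    rw [dist_comm z, dist_comm y]; nlinarith
  have hyz : dist y z = (1 - s) * dist y p := by
    rw [dist_comm y, dist_comm y]; nlinarith
  have hzp' : dist z p = (1 - (1 - s)) * dist y p := by rw [hzp]; ring
  have h := eq_lineMap_of_dist_eq_mul_of_dist_eq_mul hyz hzp'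
  rw [hz, ← lineMap_apply_one_sub, lineMap_apply_module, lineMap_apply_module] at h
  exact smul_right_injective E (sub_ne_zero.2 hs1.ne') (add_left_cancel h).symm

variable (f : E → E → E)

theorem apply_lineMap_left_of_strategyproof (hsp1 : ∀ A A' B, ‖f A B - A‖ ≤ ‖f A' B - A‖)
    (A B : E) {s : ℝ} (hs0 : 0 ≤ s) (hs1 : s < 1) :
    f (lineMap (f A B) A s) B = f A B :=
  eq_of_dist_lineMap_le_of_dist_le hs0 hs1 (by simpa only [dist_eq_norm] using hsp1 _ A B)
    (by simpa only [dist_eq_norm] using hsp1 A _ B)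

theorem norm_apply_sub_le_norm_add_smul_of_strategyproof
    (hsp1 : ∀ A A' B, ‖f A B - A‖ ≤ ‖f A' B - A‖)
    (hsp2 : ∀ A B B', ‖f A B - B‖ ≤ ‖f A B' - B‖) (huna : ∀ C, f C C = C)
    (A B : E) {t : ℝ} (ht0 : 0 < t) (ht1 : t < 1) :
    ‖f A B - B‖ ≤ ‖f A B - B + t • (A - f A B)‖ := by
  have h := hsp2 (lineMap (f A B) A t) B (lineMap (f A B) A t)
  rwa [huna, apply_lineMap_left_of_strategyproof f hsp1 A B ht0.le ht1, lineMap_apply,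
    vadd_eq_add, vsub_eq_sub, add_sub_assoc, add_comm] at h

theorem norm_apply_sub_le_norm_add_smul_neg_of_strategyproof
    (hsp1 : ∀ A A' B, ‖f A B - A‖ ≤ ‖f A' B - A‖)
    (hsp2 : ∀ A B B', ‖f A B - B‖ ≤ ‖f A B' - B‖)
    (htrans : ∀ A B t, f (A + t) (B + t) = f A B + t)
    (A B : E) {t : ℝ} (ht0 : 0 < t) (ht1 : t < 1) :
    ‖f A B - B‖ ≤ ‖f A B - B + t • -(A - f A B)‖ := by
  -- `(Z, B + (Z - A))` is the translate of `(A, B)` by `Z - A`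
  set Z := lineMap (f A B) A (1 - t)
  have hZ : Z = A + t • -(A - f A B) := by
    simp only [Z, lineMap_apply, vadd_eq_add, vsub_eq_sub]; module
  have h := hsp2 Z B (B + t • -(A - f A B))
  rwa [apply_lineMap_left_of_strategyproof f hsp1 A B (by linarith) (by linarith), hZ, htrans,
    add_sub_right_comm] at h

end StrictConvexSpace

theorem stmt5_general {m : ℕ}
    (f : EuclideanSpace ℝ (Fin m) → EuclideanSpace ℝ (Fin m) → EuclideanSpace ℝ (Fin m))
    (hsp1 : ∀ A A' B, ‖f A B - A‖ ≤ ‖f A' B - A‖)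
    (hsp2 : ∀ A B B', ‖f A B - B‖ ≤ ‖f A B' - B‖)
    (huna : ∀ C, f C C = C)
    (htrans : ∀ A B t, f (A + t) (B + t) = f A B + t) :
    ∀ A B : EuclideanSpace ℝ (Fin m),
      (inner ℝ (A - f A B) (B - f A B) : ℝ) = 0 := by
  intro A B
  have hle := inner_nonneg_of_forall_norm_le_norm_add_smul fun t ht0 ht1 =>
    norm_apply_sub_le_norm_add_smul_of_strategyproof f hsp1 hsp2 huna A B ht0 ht1
  have hge := inner_nonneg_of_forall_norm_le_norm_add_smul fun t ht0 ht1 =>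
    norm_apply_sub_le_norm_add_smul_neg_of_strategyproof f hsp1 hsp2 htrans A B ht0 ht1
  rw [inner_neg_right] at hge
  rw [← neg_sub (f A B) B, inner_neg_right, real_inner_comm]
  linarith

/-- In Euclidean m-space (m ≥ 2) with two agents, the output of a
deterministic, unanimous, translation-invariant, strategyproof mechanism lies on
the sphere with the agents' segment as diameter: `(A − W)·(B − W) = 0`. -/
theorem stmt5 {m : ℕ} (hm : 2 ≤ m)
    (f : EuclideanSpace ℝ (Fin m) → EuclideanSpace ℝ (Fin m) → EuclideanSpace ℝ (Fin m))
    (hsp1 : ∀ A A' B, ‖f A B - A‖ ≤ ‖f A' B - A‖)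
    (hsp2 : ∀ A B B', ‖f A B - B‖ ≤ ‖f A B' - B‖)
    (huna : ∀ C, f C C = C)
    (htrans : ∀ A B t, f (A + t) (B + t) = f A B + t) :
    ∀ A B : EuclideanSpace ℝ (Fin m),
      (inner ℝ (A - f A B) (B - f A B) : ℝ) = 0 :=
  stmt5_general f hsp1 hsp2 huna htrans
end

section
/- In Euclidean m-space with two agents, let f be a deterministic, unanimous, translation-invariant, strategyproof mechanism, and assume the established facts: (i) f is scalable in the sense that any dilation about a point can be realized (f(kA + t, kB + t) = k f(A,B) + t for k > 0, t ∈ ℝ^m), and (ii) for all A, B the output lies on the sphere with AB as diameter. If additionally f is rotation-invariant (conjugating the input profile by any rotation of ℝ^m conjugates the output by the same rotation), then f is dictatorial: either f(A,B) = A for all A, B, or f(A,B) = B for all A, B. -/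
/-!
Write `g = f 0`, so that `f A B = g (B - A) + A`. Scalability and rotation invariance make `g`
positively homogeneous and equivariant under `SO(m)`. Identify a plane through a unit vector `e`
with `ℂ`, sending `e` to `1`; rotations of the plane are multiplications by unit complex numbers,
and extend to rotations of the whole space as products of two hyperplane reflections. Hence `g`
acts on the plane as multiplication by the coordinate `c` of `g e`. If `c ≠ 1`, agent 1 at `0`
facing agent 2 at `e` can report `w = c / (c - 1)` and move the outcome to `w + (1 - w) c = 0`,
her own location, so strategyproofness forces `g e = 0`. Thus `g e ∈ {0, e}`, and the same plane
argument spreads this to `g v = 0` for all `v` or `g v = v` for all `v`.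
-/

open scoped RealInnerProductSpace ComplexConjugate
open Module Submodule

theorem apply_eq_apply_zero_sub_add {G : Type*} [AddGroup G] {f : G → G → G}
    (htrans : ∀ A B t, f (A + t) (B + t) = f A B + t) (A B : G) : f A B = f 0 (B - A) + A := by
  simpa using htrans 0 (B - A) A

variable {E : Type*} [NormedAddCommGroup E] [InnerProductSpace ℝ E]

theorem det_reflection_orthogonal_span_singleton [FiniteDimensional ℝ E] {v : E} (hv : v ≠ 0) :
    LinearMap.det ((ℝ ∙ v)ᗮ.reflection.toLinearEquiv : E →ₗ[ℝ] E) = -1 := by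
  have := (ℝ ∙ v)ᗮ.det_reflection
  rwa [orthogonal_orthogonal, finrank_span_singleton hv, pow_one] at this

theorem exists_norm_eq_one_inner_eq_zero [FiniteDimensional ℝ E] (hE : 2 ≤ finrank ℝ E) (e : E) :
    ∃ u : E, ‖u‖ = 1 ∧ ⟪e, u⟫ = 0 := by
  have hK : 0 < finrank ℝ (ℝ ∙ e)ᗮ := by
    have := (ℝ ∙ e).finrank_add_finrank_orthogonal
    have : finrank ℝ (ℝ ∙ e) ≤ 1 := (finrank_span_le_card ({e} : Set E)).trans (by simp)
    omega
  obtain ⟨⟨u, hu⟩, hne⟩ := finrank_pos_iff_exists_ne_zero.mp hK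
  have hu0 : u ≠ 0 := fun h => hne (by simp [h])
  refine ⟨‖u‖⁻¹ • u, norm_smul_inv_norm hu0, ?_⟩
  rw [real_inner_smul_right, mem_orthogonal_singleton_iff_inner_right.mp hu, mul_zero]

def planeMap (e₁ e₂ : E) : ℂ →ₗ[ℝ] E :=
  Complex.reLm.smulRight e₁ + Complex.imLm.smulRight e₂

theorem planeMap_apply (e₁ e₂ : E) (z : ℂ) : planeMap e₁ e₂ z = z.re • e₁ + z.im • e₂ := rfl

@[simp]
theorem planeMap_one (e₁ e₂ : E) : planeMap e₁ e₂ 1 = e₁ := by simp [planeMap_apply]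

section Orthonormal

variable {e₁ e₂ : E}

theorem inner_planeMap (h₁ : ‖e₁‖ = 1) (h₂ : ‖e₂‖ = 1) (h₁₂ : ⟪e₁, e₂⟫ = 0) (z w : ℂ) :
    ⟪planeMap e₁ e₂ z, planeMap e₁ e₂ w⟫ = (conj z * w).re := by
  have h₂₁ : ⟪e₂, e₁⟫ = 0 := by rw [real_inner_comm, h₁₂]
  simp only [planeMap_apply, inner_add_left, inner_add_right, real_inner_smul_left,
    real_inner_smul_right, real_inner_self_eq_norm_sq, h₁, h₂, h₁₂, h₂₁, Complex.mul_re,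
    Complex.conj_re, Complex.conj_im]
  ring

theorem norm_planeMap (h₁ : ‖e₁‖ = 1) (h₂ : ‖e₂‖ = 1) (h₁₂ : ⟪e₁, e₂⟫ = 0) (z : ℂ) :
    ‖planeMap e₁ e₂ z‖ = ‖z‖ := by
  rw [← sq_eq_sq₀ (norm_nonneg _) (norm_nonneg _), ← real_inner_self_eq_norm_sq,
    inner_planeMap h₁ h₂ h₁₂, RCLike.conj_mul]
  norm_cast

theorem reflection_planeMap (h₁ : ‖e₁‖ = 1) (h₂ : ‖e₂‖ = 1) (h₁₂ : ⟪e₁, e₂⟫ = 0) {n : ℂ}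
    (hn : ‖n‖ = 1) (w : ℂ) :
    (ℝ ∙ planeMap e₁ e₂ n)ᗮ.reflection (planeMap e₁ e₂ w) = planeMap e₁ e₂ (-(n ^ 2 * conj w)) := by
  have hnn : n * conj n = 1 := by rw [RCLike.mul_conj, hn]; simp
  have hre : (2 * (conj n * w).re : ℂ) = conj n * w + n * conj w := by
    rw [Complex.re_eq_add_conj]
    simp only [map_mul, RingHomCompTriple.comp_apply, RingHom.id_apply]
    ring
  rw [reflection_orthogonal_apply, reflection_singleton_apply, inner_planeMap h₁ h₂ h₁₂,
    norm_planeMap h₁ h₂ h₁₂, hn]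
  simp only [← map_nsmul, ← map_smul, ← map_sub, ← map_neg]
  congr 1
  simp only [RCLike.ofReal_one, one_pow, div_one, nsmul_eq_mul, Complex.real_smul]
  linear_combination (-n) * hre - w * hnn

theorem exists_rotation_planeMap [FiniteDimensional ℝ E] (h₁ : ‖e₁‖ = 1)
    (h₂ : ‖e₂‖ = 1) (h₁₂ : ⟪e₁, e₂⟫ = 0) {ζ : ℂ} (hζ : ‖ζ‖ = 1) :
    ∃ R : E ≃ₗᵢ[ℝ] E, LinearMap.det (R.toLinearEquiv : E →ₗ[ℝ] E) = 1 ∧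
      ∀ z, R (planeMap e₁ e₂ z) = planeMap e₁ e₂ (ζ * z) := by
  obtain ⟨η, hη⟩ := IsAlgClosed.exists_pow_nat_eq ζ two_pos
  have hη1 : ‖η‖ = 1 := by
    rw [← pow_left_inj₀ (norm_nonneg η) zero_le_one two_ne_zero, ← norm_pow, hη, hζ, one_pow]
  have hI : ‖Complex.I‖ = 1 := Complex.norm_I
  have hIη : ‖Complex.I * η‖ = 1 := by rw [norm_mul, hI, hη1, one_mul]
  have hne : ∀ {n : ℂ}, ‖n‖ = 1 → planeMap e₁ e₂ n ≠ 0 := fun {n} hn h => by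
    simpa [h, hn] using norm_planeMap h₁ h₂ h₁₂ n
  -- On `ℂ` these two reflections are `w ↦ w̄` and `w ↦ η² w̄`.
  refine ⟨(ℝ ∙ planeMap e₁ e₂ Complex.I)ᗮ.reflection.trans
    (ℝ ∙ planeMap e₁ e₂ (Complex.I * η))ᗮ.reflection, ?_, fun z => ?_⟩
  · rw [LinearIsometryEquiv.toLinearEquiv_trans, LinearEquiv.coe_trans, LinearMap.det_comp,
      det_reflection_orthogonal_span_singleton (hne hIη),
      det_reflection_orthogonal_span_singleton (hne hI)]
    norm_num
  · rw [LinearIsometryEquiv.trans_apply, reflection_planeMap h₁ h₂ h₁₂ hI,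
      reflection_planeMap h₁ h₂ h₁₂ hIη, ← hη]
    congr 1
    simp only [map_neg, map_mul, map_pow, Complex.conj_I, Complex.conj_conj, mul_pow]
    simp only [neg_pow_two, Complex.I_sq]
    ring

end Orthonormal

theorem exists_planeMap_eq [FiniteDimensional ℝ E] (hE : 2 ≤ finrank ℝ E) {e : E} (he : ‖e‖ = 1)
    (v : E) : ∃ e₂ : E, ‖e₂‖ = 1 ∧ ⟪e, e₂⟫ = 0 ∧ ∃ z : ℂ, planeMap e e₂ z = v := by
  set q := v - ⟪e, v⟫ • e with hq_def
  have hq : ⟪e, q⟫ = 0 := by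
    rw [inner_sub_right, real_inner_smul_right, real_inner_self_eq_norm_sq, he]
    ring
  obtain ⟨e₂, h₂, h₁₂, hqe₂⟩ : ∃ e₂ : E, ‖e₂‖ = 1 ∧ ⟪e, e₂⟫ = 0 ∧ ‖q‖ • e₂ = q := by
    by_cases hq0 : q = 0
    · obtain ⟨u, hu, heu⟩ := exists_norm_eq_one_inner_eq_zero hE e
      exact ⟨u, hu, heu, by simp [hq0]⟩
    · refine ⟨‖q‖⁻¹ • q, norm_smul_inv_norm hq0, ?_, ?_⟩
      · rw [real_inner_smul_right, hq, mul_zero]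
      · rw [smul_smul, mul_inv_cancel₀ (norm_ne_zero_iff.mpr hq0), one_smul]
  refine ⟨e₂, h₂, h₁₂, ⟨⟪e, v⟫, ‖q‖⟩, ?_⟩
  rw [planeMap_apply, hqe₂, hq_def]
  abel

def IsRotationEquivariant (g : E → E) : Prop :=
  ∀ R : E ≃ₗᵢ[ℝ] E, LinearMap.det (R.toLinearEquiv : E →ₗ[ℝ] E) = 1 → ∀ v, g (R v) = R (g v)

section Equivariant

variable [FiniteDimensional ℝ E] {g : E → E}

theorem IsRotationEquivariant.map_planeMap (hrot : IsRotationEquivariant g) (hg0 : g 0 = 0)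
    (hhom : ∀ k : ℝ, 0 < k → ∀ v, g (k • v) = k • g v) {e₁ e₂ : E} (h₁ : ‖e₁‖ = 1)
    (h₂ : ‖e₂‖ = 1) (h₁₂ : ⟪e₁, e₂⟫ = 0) {c : ℂ} (hc : g e₁ = planeMap e₁ e₂ c) (z : ℂ) :
    g (planeMap e₁ e₂ z) = planeMap e₁ e₂ (z * c) := by
  rcases eq_or_ne z 0 with rfl | hz
  · simp [hg0]
  have hz' : (‖z‖ : ℂ) ≠ 0 := by exact_mod_cast norm_ne_zero_iff.mpr hz
  obtain ⟨R, hR, hRz⟩ := exists_rotation_planeMap h₁ h₂ h₁₂ (ζ := z / ‖z‖) (by simp [hz])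
  have hpolar : ∀ w, planeMap e₁ e₂ (z * w) = ‖z‖ • R (planeMap e₁ e₂ w) := fun w => by
    rw [hRz, ← map_smul, Complex.real_smul, ← mul_assoc, mul_div_cancel₀ _ hz']
  calc g (planeMap e₁ e₂ z) = g (‖z‖ • R e₁) := by simpa using congrArg g (hpolar 1)
    _ = ‖z‖ • R (planeMap e₁ e₂ c) := by rw [hhom _ (norm_pos_iff.mpr hz), hrot R hR, hc]
    _ = planeMap e₁ e₂ (z * c) := (hpolar c).symm

theorem IsRotationEquivariant.eq_smul (hE : 2 ≤ finrank ℝ E) (hrot : IsRotationEquivariant g)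
    (hg0 : g 0 = 0) (hhom : ∀ k : ℝ, 0 < k → ∀ v, g (k • v) = k • g v) {e : E} (he : ‖e‖ = 1)
    {c : ℝ} (hc : g e = c • e) (v : E) : g v = c • v := by
  obtain ⟨e₂, h₂, h₁₂, z, rfl⟩ := exists_planeMap_eq hE he v
  have hc' : g e = planeMap e e₂ c := by simp [planeMap_apply, hc]
  rw [hrot.map_planeMap hg0 hhom he h₂ h₁₂ hc', mul_comm, ← Complex.real_smul, map_smul]

end Equivariant

theorem apply_zero_eq_zero_or_self [FiniteDimensional ℝ E] {f : E → E → E} (hE : 2 ≤ finrank ℝ E)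
    (hsp : ∀ A A' B, ‖f A B - A‖ ≤ ‖f A' B - A‖)
    (htrans : ∀ A B t, f (A + t) (B + t) = f A B + t) (hrot : IsRotationEquivariant (f 0))
    (hf0 : f 0 0 = 0) (hhom : ∀ k : ℝ, 0 < k → ∀ v, f 0 (k • v) = k • f 0 v) {e : E}
    (he : ‖e‖ = 1) : f 0 e = 0 ∨ f 0 e = e := by
  obtain ⟨e₂, h₂, h₁₂, c, hc⟩ := exists_planeMap_eq hE he (f 0 e)
  by_cases hc1 : c = 1
  · exact Or.inr (by rw [← hc, hc1, planeMap_one])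
  refine Or.inl (norm_le_zero_iff.mp ?_)
  set w := c / (c - 1)
  have hdev : f (planeMap e e₂ w) e = 0 := calc
    f (planeMap e e₂ w) e = f 0 (planeMap e e₂ 1 - planeMap e e₂ w) + planeMap e e₂ w := by
      rw [apply_eq_apply_zero_sub_add htrans, planeMap_one]
    _ = planeMap e e₂ ((1 - w) * c + w) := by
      rw [← map_sub, hrot.map_planeMap hf0 hhom he h₂ h₁₂ hc.symm, map_add]
    _ = 0 := by
      have : c - 1 ≠ 0 := sub_ne_zero.mpr hc1
      rw [show (1 - w) * c + w = 0 by simp only [w]; field_simp; ring, map_zero]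
  simpa [hdev] using hsp 0 (planeMap e e₂ w) e

theorem stmt9_general {m : ℕ} (hm : 2 ≤ m)
    (f : EuclideanSpace ℝ (Fin m) → EuclideanSpace ℝ (Fin m) → EuclideanSpace ℝ (Fin m))
    (hsp1 : ∀ A A' B, ‖f A B - A‖ ≤ ‖f A' B - A‖)
    (huna : ∀ C, f C C = C)
    (htrans : ∀ A B t, f (A + t) (B + t) = f A B + t)
    (hscale : ∀ (k : ℝ), 0 < k → ∀ (t A B : EuclideanSpace ℝ (Fin m)),
      f (k • A + t) (k • B + t) = k • f A B + t)
    (hrot : ∀ (R : EuclideanSpace ℝ (Fin m) ≃ₗᵢ[ℝ] EuclideanSpace ℝ (Fin m)),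
      LinearMap.det (R.toLinearEquiv : EuclideanSpace ℝ (Fin m) →ₗ[ℝ] EuclideanSpace ℝ (Fin m)) = 1 →
      ∀ (c A B : EuclideanSpace ℝ (Fin m)),
        f (R (A - c) + c) (R (B - c) + c) = R (f A B - c) + c) :
    (∀ A B, f A B = A) ∨ (∀ A B, f A B = B) := by
  have hE : 2 ≤ finrank ℝ (EuclideanSpace ℝ (Fin m)) := by rwa [finrank_euclideanSpace_fin]
  have hhom : ∀ k : ℝ, 0 < k → ∀ v, f 0 (k • v) = k • f 0 v := fun k hk v => by
    simpa using hscale k hk 0 0 v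
  have hrot₀ : IsRotationEquivariant (f 0) := fun R hR v => by simpa using hrot R hR 0 0 v
  have : Nontrivial (EuclideanSpace ℝ (Fin m)) := nontrivial_of_finrank_pos (R := ℝ) (by omega)
  obtain ⟨e, he⟩ := exists_norm_eq (EuclideanSpace ℝ (Fin m)) zero_le_one
  have hlin : ∀ c : ℝ, f 0 e = c • e → ∀ A B, f A B = c • (B - A) + A := fun c hc A B => by
    rw [apply_eq_apply_zero_sub_add htrans, hrot₀.eq_smul hE (huna 0) hhom he hc]
  rcases apply_zero_eq_zero_or_self hE hsp1 htrans hrot₀ (huna 0) hhom he with h | h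
  · exact Or.inl fun A B => by simpa using hlin 0 (by simpa using h) A B
  · exact Or.inr fun A B => by simpa using hlin 1 (by simpa using h) A B

/-- A deterministic, unanimous, translation-invariant, strategyproof
two-agent mechanism in Euclidean m-space that is scalable (about any point), whose
output lies on the sphere with the agents' segment as diameter, and which is
rotation-invariant, must be dictatorial. -/
theorem stmt9 {m : ℕ} (hm : 2 ≤ m)
    (f : EuclideanSpace ℝ (Fin m) → EuclideanSpace ℝ (Fin m) → EuclideanSpace ℝ (Fin m))
    (hsp1 : ∀ A A' B, ‖f A B - A‖ ≤ ‖f A' B - A‖)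
    (hsp2 : ∀ A B B', ‖f A B - B‖ ≤ ‖f A B' - B‖)
    (huna : ∀ C, f C C = C)
    (htrans : ∀ A B t, f (A + t) (B + t) = f A B + t)
    (hscale : ∀ (k : ℝ), 0 < k → ∀ (t A B : EuclideanSpace ℝ (Fin m)),
      f (k • A + t) (k • B + t) = k • f A B + t)
    (hsphere : ∀ A B, (inner ℝ (A - f A B) (B - f A B) : ℝ) = 0)
    (hrot : ∀ (R : EuclideanSpace ℝ (Fin m) ≃ₗᵢ[ℝ] EuclideanSpace ℝ (Fin m)),
      LinearMap.det (R.toLinearEquiv : EuclideanSpace ℝ (Fin m) →ₗ[ℝ] EuclideanSpace ℝ (Fin m)) = 1 →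
      ∀ (c A B : EuclideanSpace ℝ (Fin m)),
        f (R (A - c) + c) (R (B - c) + c) = R (f A B - c) + c) :
    (∀ A B, f A B = A) ∨ (∀ A B, f A B = B) :=
  stmt9_general hm f hsp1 huna htrans hscale hrot
end

section
/- In the Euclidean plane ℝ², the coordinate-wise max mechanism f(A, B) = (max{x_A, x_B}, max{y_A, y_B}) is strategyproof: for all A, B ∈ ℝ² and all misreports B' ∈ ℝ², ‖f(A, B) − B‖ ≤ ‖f(A, B') − B‖ (and symmetrically for agent A), where ‖·‖ is the Euclidean norm. -/
/-- The coordinate-wise max mechanism in the Euclidean plane. -/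
noncomputable def cmax (A B : EuclideanSpace ℝ (Fin 2)) : EuclideanSpace ℝ (Fin 2) :=
  (WithLp.equiv 2 (Fin 2 → ℝ)).symm (fun i => max (A i) (B i))

lemma key (a b b' : ℝ) : |max a b - b| ≤ |max a b' - b| := by
  rcases le_or_gt a b with h | h
  · simp [max_eq_right h]
  · have h1 : max a b - b = a - b := by rw [max_eq_left h.le]
    have h2 : a - b ≤ max a b' - b := by
      have := le_max_left a b'; linarith
    rw [h1, abs_of_pos (by linarith)]
    exact h2.trans (le_abs_self _)

lemma main (A B B' : EuclideanSpace ℝ (Fin 2)) : ‖cmax A B - B‖ ≤ ‖cmax A B' - B‖ := by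
  rw [EuclideanSpace.norm_eq, EuclideanSpace.norm_eq]
  apply Real.sqrt_le_sqrt
  apply Finset.sum_le_sum
  intro i _
  have : |cmax A B i - B i| ≤ |cmax A B' i - B i| := key (A i) (B i) (B' i)
  calc ‖(cmax A B - B) i‖ ^ 2 = |cmax A B i - B i| ^ 2 := by
        simp [Real.norm_eq_abs]
    _ ≤ |cmax A B' i - B i| ^ 2 := by
        apply pow_le_pow_left₀ (abs_nonneg _) this
    _ = ‖(cmax A B' - B) i‖ ^ 2 := by simp [Real.norm_eq_abs]

/-- The coordinate-wise max mechanism is strategyproof for both agents. -/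
theorem stmt10 :
    (∀ A B B' : EuclideanSpace ℝ (Fin 2), ‖cmax A B - B‖ ≤ ‖cmax A B' - B‖) ∧
    (∀ A A' B : EuclideanSpace ℝ (Fin 2), ‖cmax A B - A‖ ≤ ‖cmax A' B - A‖) := by
  constructor
  · exact main
  · intro A A' B
    have h1 : cmax A B = cmax B A := by
      unfold cmax; congr 1; funext i; exact max_comm _ _
    have h2 : cmax A' B = cmax B A' := by
      unfold cmax; congr 1; funext i; exact max_comm _ _
    rw [h1, h2]; exact main B A A'
end
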